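/- Let F : ℝⁿ → ℝᵐ satisfy the local tangential cone condition with constant η ∈ [0, 1/2), and suppose x⋆ ∈ ℝⁿ satisfies F(x⋆) = 0. Let I ⊆ {1,…,m} be a nonempty index subset, let x_k ∈ ℝⁿ with F'_I(x_k) ≠ 0, let α ∈ (0, 2(1−η)), and define x_{k+1} = x_k − α (F'_I(x_k))ᵀ F_I(x_k) / ‖F'_I(x_k)‖₂². Then ‖x_{k+1} − x⋆‖₂² ≤ ‖x_k − x⋆‖₂² − (2(1−η)α − α²) ‖F_I(x_k)‖₂² / ‖F'_I(x_k)‖₂². -/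

import Mathlib

open Matrix

/-- The singular values of a real matrix `A`: square roots of the eigenvalues of `AᵀA`. -/
noncomputable def singVals {m' : Type*} [Fintype m'] {n : ℕ}
    (A : Matrix m' (Fin n) ℝ) : Fin n → ℝ :=
  fun j => Real.sqrt ((show (Aᵀ * A).IsHermitian from Matrix.isHermitian_conjTranspose_mul_self A).eigenvalues j)

/-- The largest singular value of `A`, i.e. its spectral norm `‖A‖₂`. -/
noncomputable def sigmaMax {m' : Type*} [Fintype m'] {n : ℕ}
    (A : Matrix m' (Fin n) ℝ) : ℝ :=
  ⨆ j, singVals A j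

/-!
Put `y = x_k − x⋆`, `g = F'_I(x_k)ᵀ F_I(x_k)` and `σ = ‖F'_I(x_k)‖₂`, so that
`x_{k+1} − x⋆ = y − (α/σ²) g`. Since `F_i(x⋆) = 0`, the tangential cone condition at `(x_k, x⋆)`
says `|F_i(x_k) − ∇F_i(x_k)·y| ≤ η |F_i(x_k)|`, whence `F_i(x_k) ∇F_i(x_k)·y ≥ (1−η) F_i(x_k)²`;
summing over `I` gives `⟪y, g⟫ ≥ (1−η) ‖F_I(x_k)‖²`. On the other hand `‖g‖ ≤ σ ‖F_I(x_k)‖`,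
because `σ²` bounds the Rayleigh quotient of `F'_I(x_k)ᵀ F'_I(x_k)` and a matrix and its
transpose have the same operator norm. Expanding `‖y − (α/σ²) g‖²` with these two bounds gives
the claim.
-/

open RealInnerProductSpace

theorem Matrix.IsHermitian.dotProduct_mulVec_le_of_eigenvalues_le {ι : Type*} [Fintype ι]
    [DecidableEq ι] {H : Matrix ι ι ℝ} (hH : H.IsHermitian) {c : ℝ}
    (hc : ∀ i, hH.eigenvalues i ≤ c) (x : ι → ℝ) :
    x ⬝ᵥ H *ᵥ x ≤ c * (x ⬝ᵥ x) := by
  have hpsd : (algebraMap ℝ _ c - H).PosSemidef := by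
    refine posSemidef_iff_isHermitian_and_spectrum_nonneg.2 ⟨?_, ?_⟩
    · exact ((IsSelfAdjoint.all c).algebraMap _).sub hH
    · rw [← spectrum.singleton_sub_eq, hH.spectrum_real_eq_range_eigenvalues]
      rintro _ ⟨_, rfl, _, ⟨i, rfl⟩, rfl⟩
      simpa using hc i
  have hquad := hpsd.dotProduct_mulVec_nonneg x
  rw [Algebra.algebraMap_eq_smul_one] at hquad
  simp only [sub_mulVec, smul_mulVec, one_mulVec, dotProduct_sub, dotProduct_smul, star_trivial,
    smul_eq_mul] at hquad
  linarith

section SpectralNorm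

variable {m' : Type*} [Fintype m'] {n : ℕ}

theorem sigmaMax_nonneg (A : Matrix m' (Fin n) ℝ) : 0 ≤ sigmaMax A :=
  Real.iSup_nonneg fun _ => Real.sqrt_nonneg _

theorem eigenvalues_le_sigmaMax_sq (A : Matrix m' (Fin n) ℝ) (j : Fin n) :
    (isHermitian_conjTranspose_mul_self A).eigenvalues j ≤ sigmaMax A ^ 2 := by
  rw [← Real.sq_sqrt (eigenvalues_conjTranspose_mul_self_nonneg A j)]
  exact pow_le_pow_left₀ (Real.sqrt_nonneg _)
    (le_ciSup (f := singVals A) (Set.finite_range _).bddAbove j) 2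

open scoped Matrix.Norms.L2Operator

theorem Matrix.l2_opNorm_le_sigmaMax (A : Matrix m' (Fin n) ℝ) : ‖A‖ ≤ sigmaMax A := by
  rw [l2_opNorm_def]
  refine ContinuousLinearMap.opNorm_le_bound _ (sigmaMax_nonneg A) fun x => ?_
  rw [← pow_le_pow_iff_left₀ (norm_nonneg _) (mul_nonneg (sigmaMax_nonneg A) (norm_nonneg x))
    two_ne_zero, LinearEquiv.trans_apply, LinearMap.coe_toContinuousLinearMap', toLpLin_apply,
    mul_pow, ← real_inner_self_eq_norm_sq, ← real_inner_self_eq_norm_sq, EuclideanSpace.inner_toLp_toLp,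
    EuclideanSpace.inner_eq_star_dotProduct, star_trivial, star_trivial]
  have hgram : (A *ᵥ x.ofLp) ⬝ᵥ (A *ᵥ x.ofLp) = x.ofLp ⬝ᵥ (Aᵀ * A) *ᵥ x.ofLp := by
    rw [← mulVec_mulVec, dotProduct_mulVec x.ofLp, vecMul_transpose]
  rw [hgram]
  exact (show (Aᵀ * A).IsHermitian from isHermitian_conjTranspose_mul_self A)
    |>.dotProduct_mulVec_le_of_eigenvalues_le (eigenvalues_le_sigmaMax_sq A) x.ofLp

theorem norm_sum_smul_sq_le_sigmaMax_sq {ι : Type*} (S : Finset ι) (f : ι → ℝ)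
    (u : ι → EuclideanSpace ℝ (Fin n)) :
    ‖∑ i ∈ S, f i • u i‖ ^ 2 ≤
      sigmaMax (Matrix.of fun (i : S) j => u i j) ^ 2 * ∑ i ∈ S, f i ^ 2 := by
  classical
  set A := Matrix.of fun (i : S) j => u i j
  set v : EuclideanSpace ℝ S := WithLp.toLp 2 fun i => f i
  have hsum : ∑ i ∈ S, f i • u i = (EuclideanSpace.equiv (Fin n) ℝ).symm (Aᵀ *ᵥ v) := by
    ext j
    simp only [WithLp.ofLp_sum, WithLp.ofLp_smul, Finset.sum_apply, Pi.smul_apply, smul_eq_mul]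
    rw [← Finset.sum_coe_sort S]
    exact Finset.sum_congr rfl fun i _ => mul_comm _ _
  have hv : ‖v‖ ^ 2 = ∑ i ∈ S, f i ^ 2 := by
    rw [EuclideanSpace.real_norm_sq_eq]
    exact Finset.sum_coe_sort S (fun i => f i ^ 2)
  have hnorm : ‖∑ i ∈ S, f i • u i‖ ≤ sigmaMax A * ‖v‖ := by
    calc ‖∑ i ∈ S, f i • u i‖ ≤ ‖Aᵀ‖ * ‖v‖ := hsum ▸ l2_opNorm_mulVec Aᵀ v
      _ = ‖A‖ * ‖v‖ := by rw [← conjTranspose_eq_transpose_of_trivial, l2_opNorm_conjTranspose]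
      _ ≤ sigmaMax A * ‖v‖ := by gcongr; exact l2_opNorm_le_sigmaMax A
  rw [← hv, ← mul_pow]
  exact pow_le_pow_left₀ (norm_nonneg _) hnorm 2

end SpectralNorm

theorem one_sub_mul_sq_le_mul_of_abs_sub_le {a b η : ℝ} (h : |a - b| ≤ η * |a|) :
    (1 - η) * a ^ 2 ≤ a * b := by
  have hprod : a * (a - b) ≤ η * a ^ 2 := by
    calc a * (a - b) ≤ |a| * |a - b| := by rw [← abs_mul]; exact le_abs_self _
      _ ≤ |a| * (η * |a|) := by gcongr
      _ = η * a ^ 2 := by rw [mul_left_comm, ← sq, sq_abs]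
  linarith

section KaczmarzStep

variable {E : Type*} [NormedAddCommGroup E] [InnerProductSpace ℝ E]

theorem one_sub_mul_sum_sq_le_inner_sum_smul {ι : Type*} {S : Finset ι} {r : ι → ℝ} {g : ι → E}
    {d : E} {η : ℝ} (h : ∀ i ∈ S, |r i - ⟪g i, d⟫| ≤ η * |r i|) :
    (1 - η) * ∑ i ∈ S, r i ^ 2 ≤ ⟪d, ∑ i ∈ S, r i • g i⟫ := by
  rw [Finset.mul_sum, inner_sum]
  refine Finset.sum_le_sum fun i hi => ?_
  rw [real_inner_smul_right, real_inner_comm]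
  exact one_sub_mul_sq_le_mul_of_abs_sub_le (h i hi)

theorem norm_sub_div_smul_sq_le {y g : E} {c Q s α : ℝ} (hα : 0 ≤ α) (hs : 0 ≤ s)
    (hcorr : c * Q ≤ ⟪y, g⟫) (hg : ‖g‖ ^ 2 ≤ s * Q) :
    ‖y - (α / s) • g‖ ^ 2 ≤ ‖y‖ ^ 2 - (2 * c * α - α ^ 2) * Q / s := by
  have ht : 0 ≤ α / s := div_nonneg hα hs
  calc ‖y - (α / s) • g‖ ^ 2
        = ‖y‖ ^ 2 - 2 * ((α / s) * ⟪y, g⟫) + (α / s) ^ 2 * ‖g‖ ^ 2 := by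
        rw [norm_sub_sq_real, real_inner_smul_right, norm_smul, mul_pow, Real.norm_eq_abs, sq_abs]
    _ ≤ ‖y‖ ^ 2 - 2 * ((α / s) * (c * Q)) + (α / s) ^ 2 * (s * Q) := by gcongr
    _ = ‖y‖ ^ 2 - (2 * c * α - α ^ 2) * Q / s := by
        rcases hs.eq_or_lt with rfl | hs
        · simp
        · field_simp
          ring

end KaczmarzStep

theorem abnk_constant_stepsize_step_general
    {n m : ℕ}
    (F : Fin m → EuclideanSpace ℝ (Fin n) → ℝ)
    (grad : Fin m → EuclideanSpace ℝ (Fin n) → EuclideanSpace ℝ (Fin n))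
    (η : ℝ)
    -- local tangential cone condition with constant η
    (hltcc : ∀ i (x₁ x₂ : EuclideanSpace ℝ (Fin n)),
      |F i x₁ - F i x₂ - ∑ j, grad i x₁ j * (x₁ j - x₂ j)| ≤ η * |F i x₁ - F i x₂|)
    (xstar : EuclideanSpace ℝ (Fin n)) (hstar : ∀ i, F i xstar = 0)
    (S : Finset (Fin m))
    (xk : EuclideanSpace ℝ (Fin n))
    -- the row-submatrix F'_I(x_k) of the Jacobian
    (J : Matrix {i // i ∈ S} (Fin n) ℝ)
    (hJdef : J = Matrix.of fun (i : {i // i ∈ S}) (j : Fin n) => grad i.1 xk j)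
    (α : ℝ) (hα0 : 0 < α)
    (xk1 : EuclideanSpace ℝ (Fin n))
    -- x_{k+1} = x_k − α (F'_I(x_k))ᵀ F_I(x_k) / ‖F'_I(x_k)‖₂²
    (hupd : xk1 = xk - (α / sigmaMax J ^ 2) • ∑ i ∈ S, F i xk • grad i xk) :
    ‖xk1 - xstar‖ ^ 2
      ≤ ‖xk - xstar‖ ^ 2
        - (2 * (1 - η) * α - α ^ 2) * (∑ i ∈ S, (F i xk) ^ 2) / sigmaMax J ^ 2 := by
  subst hJdef hupd
  have hcone : (1 - η) * ∑ i ∈ S, F i xk ^ 2 ≤ ⟪xk - xstar, ∑ i ∈ S, F i xk • grad i xk⟫ := by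
    refine one_sub_mul_sum_sq_le_inner_sum_smul fun i _ => ?_
    have hinner : ⟪grad i xk, xk - xstar⟫ = ∑ j, grad i xk j * (xk j - xstar j) := by
      simp only [EuclideanSpace.inner_eq_star_dotProduct, dotProduct, PiLp.sub_apply, star_trivial,
        mul_comm]
    simpa only [hstar i, sub_zero, hinner] using hltcc i xk xstar
  rw [sub_right_comm]
  exact norm_sub_div_smul_sq_le hα0.le (sq_nonneg _) hcone
    (norm_sum_smul_sq_le_sigmaMax_sq S _ _)

/-- Lemma 3: one step of the averaging block nonlinear Kaczmarz method
with constant stepsize `α ∈ (0, 2(1−η))` and weights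
`ω⁽ⁱ⁾ = ‖∇F_i(x_k)‖₂²/Σ_{j∈I}‖∇F_j(x_k)‖₂²`, i.e.
`x_{k+1} = x_k − α (F'_I(x_k))ᵀ F_I(x_k)/‖F'_I(x_k)‖₂²`, satisfies
`‖x_{k+1} − x⋆‖₂² ≤ ‖x_k − x⋆‖₂² − (2(1−η)α − α²) ‖F_I(x_k)‖₂²/‖F'_I(x_k)‖₂²`. -/
theorem abnk_constant_stepsize_step
    {n m : ℕ}
    (F : Fin m → EuclideanSpace ℝ (Fin n) → ℝ)
    (grad : Fin m → EuclideanSpace ℝ (Fin n) → EuclideanSpace ℝ (Fin n))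
    (η : ℝ) (hη0 : 0 ≤ η) (hη : η < 1 / 2)
    -- F is differentiable with Jacobian whose i-th row is ∇F_i
    (hdiff : ∀ i x, HasGradientAt (F i) (grad i x) x)
    -- local tangential cone condition with constant η
    (hltcc : ∀ i (x₁ x₂ : EuclideanSpace ℝ (Fin n)),
      |F i x₁ - F i x₂ - ∑ j, grad i x₁ j * (x₁ j - x₂ j)| ≤ η * |F i x₁ - F i x₂|)
    (xstar : EuclideanSpace ℝ (Fin n)) (hstar : ∀ i, F i xstar = 0)
    (S : Finset (Fin m)) (hS : S.Nonempty)
    (xk : EuclideanSpace ℝ (Fin n))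
    -- the row-submatrix F'_I(x_k) of the Jacobian
    (J : Matrix {i // i ∈ S} (Fin n) ℝ)
    (hJdef : J = Matrix.of fun (i : {i // i ∈ S}) (j : Fin n) => grad i.1 xk j)
    (hJ : J ≠ 0)
    (α : ℝ) (hα0 : 0 < α) (hα2 : α < 2 * (1 - η))
    (xk1 : EuclideanSpace ℝ (Fin n))
    -- x_{k+1} = x_k − α (F'_I(x_k))ᵀ F_I(x_k) / ‖F'_I(x_k)‖₂²
    (hupd : xk1 = xk - (α / sigmaMax J ^ 2) • ∑ i ∈ S, F i xk • grad i xk) :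
    ‖xk1 - xstar‖ ^ 2
      ≤ ‖xk - xstar‖ ^ 2
        - (2 * (1 - η) * α - α ^ 2) * (∑ i ∈ S, (F i xk) ^ 2) / sigmaMax J ^ 2 :=
  abnk_constant_stepsize_step_general F grad η hltcc xstar hstar S xk J hJdef α hα0 xk1 hupd
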